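/- arXiv:1503.02306 — 2 statements merged into one kernel-verified Lean document; each statement's English description precedes it below -/
import Mathlib

section
/- Take ε = 0 in the KAM linear program for DMU l, with all weights w_j^-, w_k^+ strictly positive. Then the optimal value of the program is 0 if and only if DMU l is technically (Pareto) efficient with respect to the convex hull of the DMUs, i.e., if and only if there is no λ ∈ ℝ_+^n with Σ_i λ_i = 1 such that Σ_i λ_i x_{ij} ≤ x_{lj} for all j and Σ_i λ_i y_{ik} ≥ y_{lk} for all k, with strict inequality in at least one of these m + p coordinates. -/
/-!
With `ε = 0` the slacks of a feasible point are determined by `λ`: they are the input savings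
`x_l - Σ λ_i x_i` and output gains `Σ λ_i y_i - y_l` of the composite unit, which must both be
nonnegative, and the two remaining constraints then hold automatically because the data are
nonnegative. So the feasible values are exactly the weighted total improvements of composite
units dominating DMU `l`. DMU `l` itself is such a unit with improvement `0`, and since the
weights are positive, an improvement is positive exactly when the domination is strict in
some coordinate.
-/

open Finset

namespace KAM

variable {ι J K : Type*} [Fintype ι] [Fintype J] [Fintype K]

theorem sum_mul_pos_iff {w s : J → ℝ} (hw : ∀ j, 0 < w j) (hs : ∀ j, 0 ≤ s j) :
    0 < ∑ j, w j * s j ↔ ∃ j, 0 < s j := by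
  rw [sum_pos_iff_of_nonneg fun j _ => mul_nonneg (hw j).le (hs j)]
  simp only [mem_univ, true_and, mul_pos_iff_of_pos_left (hw _)]

variable (x : ι → J → ℝ) (y : ι → K → ℝ) (l : ι) (wm : J → ℝ) (wp : K → ℝ)

/-- The objective values of feasible points of the KAM program for DMU `l` with
`ε = (εm, εp)`. -/
def kamValues (εm : J → ℝ) (εp : K → ℝ) : Set ℝ :=
  {v | ∃ (lam : ι → ℝ) (sm : J → ℝ) (sp : K → ℝ),
    (∀ i, 0 ≤ lam i) ∧ (∑ i, lam i) = 1 ∧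
    (∀ j, 0 ≤ sm j) ∧ (∀ k, 0 ≤ sp k) ∧
    (∀ j, (∑ i, lam i * x i j) + sm j = x l j + εm j) ∧
    (∀ k, (∑ i, lam i * y i k) - sp k = y l k - εp k) ∧
    (∀ j, 0 ≤ x l j - sm j) ∧
    (∀ k, 0 ≤ y l k + sp k - 2 * εp k) ∧
    v = (∑ j, wm j * sm j) + (∑ k, wp k * sp k)}

def Dominates (lam : ι → ℝ) : Prop :=
  (∀ j, ∑ i, lam i * x i j ≤ x l j) ∧ ∀ k, y l k ≤ ∑ i, lam i * y i k

def improvement (lam : ι → ℝ) : ℝ :=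
  ∑ j, wm j * (x l j - ∑ i, lam i * x i j) + ∑ k, wp k * (∑ i, lam i * y i k - y l k)

theorem mem_kamValues_zero_iff (hx : ∀ i j, 0 ≤ x i j) (hy : ∀ i k, 0 ≤ y i k) {v : ℝ} :
    v ∈ kamValues x y l wm wp 0 0 ↔
      ∃ lam ∈ stdSimplex ℝ ι, Dominates x y l lam ∧ v = improvement x y l wm wp lam := by
  simp only [kamValues, Pi.zero_apply, add_zero, sub_zero, mul_zero, Set.mem_ofPred_eq]
  constructor
  · rintro ⟨lam, sm, sp, hlam0, hlam1, hsm, hsp, hxeq, hyeq, -, -, rfl⟩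
    have hsm_eq : sm = fun j => x l j - ∑ i, lam i * x i j := by
      funext j; linarith [hxeq j]
    have hsp_eq : sp = fun k => ∑ i, lam i * y i k - y l k := by
      funext k; linarith [hyeq k]
    subst hsm_eq hsp_eq
    exact ⟨lam, ⟨hlam0, hlam1⟩, ⟨fun j => by linarith [hsm j], fun k => by linarith [hsp k]⟩, rfl⟩
  · rintro ⟨lam, ⟨hlam0, hlam1⟩, ⟨hxle, hyge⟩, rfl⟩
    refine ⟨lam, _, _, hlam0, hlam1, fun j => sub_nonneg.2 (hxle j),
      fun k => sub_nonneg.2 (hyge k), fun j => by ring, fun k => by ring,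
      fun j => ?_, fun k => ?_, rfl⟩
    · rw [sub_sub_cancel]
      exact sum_nonneg fun i _ => mul_nonneg (hlam0 i) (hx i j)
    · rw [add_sub_cancel]
      exact sum_nonneg fun i _ => mul_nonneg (hlam0 i) (hy i k)

variable {x y l wm wp}

theorem improvement_pos_iff (hwm : ∀ j, 0 < wm j) (hwp : ∀ k, 0 < wp k) {lam : ι → ℝ}
    (hdom : Dominates x y l lam) :
    0 < improvement x y l wm wp lam ↔
      (∃ j, ∑ i, lam i * x i j < x l j) ∨ ∃ k, y l k < ∑ i, lam i * y i k := by
  have hsm : ∀ j, 0 ≤ x l j - ∑ i, lam i * x i j := fun j => sub_nonneg.2 (hdom.1 j)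
  have hsp : ∀ k, 0 ≤ ∑ i, lam i * y i k - y l k := fun k => sub_nonneg.2 (hdom.2 k)
  rw [← (sum_mul_pos_iff hwm hsm).trans (exists_congr fun j => sub_pos),
    ← (sum_mul_pos_iff hwp hsp).trans (exists_congr fun k => sub_pos)]
  have hA := sum_nonneg fun j (_ : j ∈ univ) => mul_nonneg (hwm j).le (hsm j)
  have hB := sum_nonneg fun k (_ : k ∈ univ) => mul_nonneg (hwp k).le (hsp k)
  unfold improvement
  constructor
  · contrapose!
    rintro ⟨hA', hB'⟩
    linarith
  · rintro (h | h) <;> linarith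

omit [Fintype J] [Fintype K] in
theorem self_dominates [DecidableEq ι] : Dominates x y l (Pi.single l 1) := by
  constructor <;> intro <;> simp [Pi.single_apply]

theorem improvement_self [DecidableEq ι] : improvement x y l wm wp (Pi.single l 1) = 0 := by
  simp [improvement, Pi.single_apply]

end KAM

open KAM in
/-- With `ε = 0` and strictly positive weights, the optimal value of the
KAM linear program for DMU `l` is `0` if and only if DMU `l` is technically (Pareto)
efficient with respect to the convex hull of the DMUs: there is no convex combination
`λ` with `Σ_i λ_i x_{ij} ≤ x_{lj}` for all `j` and `Σ_i λ_i y_{ik} ≥ y_{lk}` for all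
`k`, with strict inequality in at least one coordinate. -/
theorem kam_zero_value_iff_pareto_efficient
    (n m p : ℕ) (x : Fin n → Fin m → ℝ) (y : Fin n → Fin p → ℝ) (l : Fin n)
    (hx : ∀ i j, 0 ≤ x i j) (hy : ∀ i k, 0 ≤ y i k)
    (wm : Fin m → ℝ) (wp : Fin p → ℝ)
    (hwm : ∀ j, 0 < wm j) (hwp : ∀ k, 0 < wp k) :
    IsGreatest
      {v : ℝ | ∃ (lam : Fin n → ℝ) (sm : Fin m → ℝ) (sp : Fin p → ℝ),
        (∀ i, 0 ≤ lam i) ∧ (∑ i, lam i) = 1 ∧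
        (∀ j, 0 ≤ sm j) ∧ (∀ k, 0 ≤ sp k) ∧
        (∀ j, (∑ i, lam i * x i j) + sm j = x l j + 0) ∧
        (∀ k, (∑ i, lam i * y i k) - sp k = y l k - 0) ∧
        (∀ j, 0 ≤ x l j - sm j) ∧
        (∀ k, 0 ≤ y l k + sp k - 2 * 0) ∧
        v = (∑ j, wm j * sm j) + (∑ k, wp k * sp k)} 0
    ↔
    ¬ ∃ lam : Fin n → ℝ,
        (∀ i, 0 ≤ lam i) ∧ (∑ i, lam i) = 1 ∧
        (∀ j, (∑ i, lam i * x i j) ≤ x l j) ∧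
        (∀ k, y l k ≤ (∑ i, lam i * y i k)) ∧
        ((∃ j, (∑ i, lam i * x i j) < x l j) ∨
         (∃ k, y l k < (∑ i, lam i * y i k))) := by
  change IsGreatest (kamValues x y l wm wp 0 0) 0 ↔ _
  have hzero : (0 : ℝ) ∈ kamValues x y l wm wp 0 0 :=
    (mem_kamValues_zero_iff x y l wm wp hx hy).2
      ⟨_, single_mem_stdSimplex ℝ l, self_dominates, improvement_self.symm⟩
  constructor
  · rintro ⟨-, hub⟩ ⟨lam, hlam0, hlam1, hxle, hyge, hstrict⟩
    have hle := hub ((mem_kamValues_zero_iff x y l wm wp hx hy).2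
      ⟨lam, ⟨hlam0, hlam1⟩, ⟨hxle, hyge⟩, rfl⟩)
    exact hle.not_gt ((improvement_pos_iff hwm hwp ⟨hxle, hyge⟩).2 hstrict)
  · refine fun hne => ⟨hzero, fun v hv => ?_⟩
    obtain ⟨lam, ⟨hlam0, hlam1⟩, hdom, rfl⟩ := (mem_kamValues_zero_iff x y l wm wp hx hy).1 hv
    exact not_lt.1 fun hpos =>
      hne ⟨lam, hlam0, hlam1, hdom.1, hdom.2, (improvement_pos_iff hwm hwp hdom).1 hpos⟩
end

section
/- Consider the optimization problem: maximize s₁ + s₂ over λ ∈ [0,1] and s₁, s₂ ≥ 0 subject to 4λ + 10(1−λ) − s₁ = 3.9 and 10λ + 9(1−λ) − s₂ = 9.9. Its optimal value is 0.7, attained at the unique point λ = 9/10, s₁ = 0.7, s₂ = 0; in particular the optimal intensity weight on B is 1/10 > 0, so even with the smaller perturbation ε₁⁺ = ε₂⁺ = 0.1 the neighbor of A is still benchmarked toward B rather than to A. -/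
/-! Eliminating the slacks, `s₁ = 6.1 − 6λ` and `s₂ = λ − 0.9`, so the objective is
`5.2 − 5λ` and `s₂ ≥ 0` forces `λ ≥ 9/10`: the objective is strictly decreasing in `λ`
on the feasible interval `[9/10, 1]` and is maximised only at its left end. -/

def KamFeasible (lam s₁ s₂ : ℝ) : Prop :=
  0 ≤ lam ∧ lam ≤ 1 ∧ 0 ≤ s₁ ∧ 0 ≤ s₂ ∧
    4 * lam + 10 * (1 - lam) - s₁ = 3.9 ∧ 10 * lam + 9 * (1 - lam) - s₂ = 9.9

namespace KamFeasible

variable {lam s₁ s₂ : ℝ}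

theorem slacks_eq (h : KamFeasible lam s₁ s₂) : s₁ = 61 / 10 - 6 * lam ∧ s₂ = lam - 9 / 10 := by
  obtain ⟨-, -, -, -, h₁, h₂⟩ := h
  constructor <;> linarith

theorem objective_eq (h : KamFeasible lam s₁ s₂) : s₁ + s₂ = 26 / 5 - 5 * lam := by
  obtain ⟨hs₁, hs₂⟩ := h.slacks_eq
  rw [hs₁, hs₂]
  ring

theorem nine_tenths_le (h : KamFeasible lam s₁ s₂) : 9 / 10 ≤ lam := by
  linarith [h.2.2.2.1, h.slacks_eq.2]

end KamFeasible

theorem kamFeasible_optimum : KamFeasible (9 / 10) 0.7 0 := by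
  unfold KamFeasible
  norm_num

/-- Maximizing `s₁ + s₂` over `λ ∈ [0,1]`, `s₁, s₂ ≥ 0` subject to
`4λ + 10(1−λ) − s₁ = 3.9` and `10λ + 9(1−λ) − s₂ = 9.9` has optimal value `0.7`,
attained at the unique point `λ = 9/10`, `s₁ = 0.7`, `s₂ = 0`; in particular the
optimal intensity weight on `B`, namely `1 − λ = 1/10`, is positive, so even with
`ε₁⁺ = ε₂⁺ = 0.1` the neighbor of `A` is benchmarked toward `B` rather than to `A`. -/
theorem kam_example_A_vs_B_eps_tenth
    (Feasible : ℝ → ℝ → ℝ → Prop)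
    (hFeasible : ∀ lam s₁ s₂, Feasible lam s₁ s₂ ↔
      (0 ≤ lam ∧ lam ≤ 1 ∧ 0 ≤ s₁ ∧ 0 ≤ s₂ ∧
       4 * lam + 10 * (1 - lam) - s₁ = 3.9 ∧
       10 * lam + 9 * (1 - lam) - s₂ = 9.9)) :
    IsGreatest {v : ℝ | ∃ lam s₁ s₂, Feasible lam s₁ s₂ ∧ v = s₁ + s₂} 0.7 ∧
    (∀ lam s₁ s₂, Feasible lam s₁ s₂ → s₁ + s₂ = 0.7 →
      lam = 9/10 ∧ s₁ = 0.7 ∧ s₂ = 0) ∧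
    ((1 : ℝ) - 9/10 = 1/10 ∧ (0 : ℝ) < 1 - 9/10) := by
  obtain rfl : Feasible = KamFeasible := funext₃ fun lam s₁ s₂ => propext (hFeasible lam s₁ s₂)
  refine ⟨⟨⟨9 / 10, 0.7, 0, kamFeasible_optimum, by norm_num⟩, ?_⟩, ?_, by norm_num, by norm_num⟩
  · rintro v ⟨lam, s₁, s₂, hf, rfl⟩
    linarith [hf.objective_eq, hf.nine_tenths_le]
  · intro lam s₁ s₂ hf hsum
    have hlam : lam = 9 / 10 := by linarith [hf.objective_eq]
    obtain ⟨hs₁, hs₂⟩ := hf.slacks_eq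
    refine ⟨hlam, ?_, ?_⟩ <;> subst hlam <;> norm_num [hs₁, hs₂]
end
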